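/- arXiv:2605.17607 — 2 statements merged into one kernel-verified Lean document; each statement's English description precedes it below -/
import Mathlib

section
/- The Minty variational inequality fails locally at the BNE: for every ε > 0 there exists an admissible strategy β with sup_{c∈[0,1]} |β(c) - β*(c)| < ε, β(1) = 1, β' ≥ 1/10 a.e., and ∫_0^1 (β(c) - β*(c))(1 - c - (β(c)-c)/β'(c)) dc > 0, where β*(c) = (1+c)/2. -/
/-!
Writing `δ = β - β*`, the Minty integrand is `δ ((1 - c) δ' - δ) / β'`. Pushing `β` below `β*` at
the least admissible slope `1/10` on `[0, t]` makes it `(8/5) c (1 - 2c) > 0` there, which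
contributes `≈ 4t²/5`, while climbing back to `β*` at slope `9/10` on `[t, 2t]` costs only
`≈ 4t²/45`. The pairing is `8t²(12 - 17t)/135 > 0`, and `sup |δ| = 2t/5` is as small as we like.
-/

open MeasureTheory Set intervalIntegral

noncomputable def tent (t c : ℝ) : ℝ := max 0 (min c (2 * t - c))

section Tent

variable {t c : ℝ}

lemma tent_nonneg : 0 ≤ tent t c := le_max_left _ _

lemma tent_le (ht : 0 ≤ t) : tent t c ≤ t :=
  max_le ht <| min_le_iff.2 <| (le_total c t).imp id fun h => by linarith

@[fun_prop]
lemma continuous_tent : Continuous (tent t) := by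
  unfold tent; fun_prop

lemma tent_eqOn_Ioo_zero : EqOn (tent t) id (Ioo 0 t) := fun c ⟨h₀, h₁⟩ => by
  simp only [tent, id, min_eq_left (by linarith : c ≤ 2 * t - c), max_eq_right h₀.le]

lemma tent_eqOn_Ioo_two_mul : EqOn (tent t) (fun c => 2 * t - c) (Ioo t (2 * t)) :=
  fun c ⟨h₀, h₁⟩ => by
    simp only [tent, min_eq_right (by linarith : 2 * t - c ≤ c),
      max_eq_right (by linarith : 0 ≤ 2 * t - c)]

lemma tent_eqOn_Ioi : EqOn (tent t) 0 (Ioi (2 * t)) := fun c (h : 2 * t < c) => by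
  simp only [tent, Pi.zero_apply, max_eq_left_iff, min_le_iff]
  right; linarith

lemma hasDerivAt_tent_of_mem_Ioo_zero (hc : c ∈ Ioo 0 t) : HasDerivAt (tent t) 1 c :=
  (hasDerivAt_id c).congr_of_eventuallyEq
    (tent_eqOn_Ioo_zero.eventuallyEq_of_mem (Ioo_mem_nhds hc.1 hc.2))

lemma hasDerivAt_tent_of_mem_Ioo_two_mul (hc : c ∈ Ioo t (2 * t)) : HasDerivAt (tent t) (-1) c :=
  ((hasDerivAt_id c).const_sub (2 * t)).congr_of_eventuallyEq
    (tent_eqOn_Ioo_two_mul.eventuallyEq_of_mem (Ioo_mem_nhds hc.1 hc.2))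

lemma hasDerivAt_tent_of_lt (hc : 2 * t < c) : HasDerivAt (tent t) 0 c :=
  (hasDerivAt_const c 0).congr_of_eventuallyEq
    (tent_eqOn_Ioi.eventuallyEq_of_mem (Ioi_mem_nhds hc))

end Tent

/-- Slope `1/2 - 2/5 = 1/10` on `[0, t]`, `1/2 + 2/5 = 9/10` on `[t, 2t]`, and `β*` beyond. -/
noncomputable def dipStrategy (t c : ℝ) : ℝ := (1 + c) / 2 - 2 / 5 * tent t c

noncomputable def mintyIntegrand (β : ℝ → ℝ) (c : ℝ) : ℝ :=
  (β c - (1 + c) / 2) * (1 - c - (β c - c) / deriv β c)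

section DipStrategy

variable {t c a : ℝ}

lemma continuous_dipStrategy : Continuous (dipStrategy t) := by
  unfold dipStrategy; fun_prop

lemma hasDerivAt_dipStrategy (h : HasDerivAt (tent t) a c) :
    HasDerivAt (dipStrategy t) (1 / 2 - 2 / 5 * a) c :=
  ((((hasDerivAt_id c).const_add 1).div_const 2).sub (h.const_mul (2 / 5))).congr_deriv (by simp)

lemma dipStrategy_one (ht : 2 * t < 1) : dipStrategy t 1 = 1 := by
  simp [dipStrategy, tent_eqOn_Ioi ht]

lemma abs_dipStrategy_sub_le (ht : 0 ≤ t) : |dipStrategy t c - (1 + c) / 2| ≤ 2 / 5 * t := by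
  rw [dipStrategy, sub_sub_cancel_left, abs_neg,
    abs_of_nonneg (mul_nonneg (by norm_num) tent_nonneg)]
  have := tent_le (c := c) ht
  linarith

lemma dipStrategy_mem_Icc (ht : 0 ≤ t) (ht' : t ≤ 5 / 4) (hc : c ∈ Icc 0 1) :
    dipStrategy t c ∈ Icc 0 1 := by
  have h₀ := tent_nonneg (t := t) (c := c)
  have h₁ := tent_le (c := c) ht
  constructor <;> unfold dipStrategy <;> linarith [hc.1, hc.2]

lemma ae_le_deriv_dipStrategy :
    ∀ᵐ c, c ∈ Icc (0 : ℝ) 1 → 1 / 10 ≤ deriv (dipStrategy t) c := by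
  have hfin : ({0, t, 2 * t} : Set ℝ).Countable := (toFinite _).countable
  filter_upwards [hfin.ae_notMem volume] with c hc hc01
  simp only [mem_insert_iff, mem_singleton_iff, not_or] at hc
  obtain ⟨hc0, hct, hc2t⟩ := hc
  have hpos : 0 < c := lt_of_le_of_ne hc01.1 (Ne.symm hc0)
  rcases lt_or_gt_of_ne hct with hlt | hgt
  · rw [(hasDerivAt_dipStrategy (hasDerivAt_tent_of_mem_Ioo_zero ⟨hpos, hlt⟩)).deriv]; norm_num
  rcases lt_or_gt_of_ne hc2t with hlt | hgt'
  · rw [(hasDerivAt_dipStrategy (hasDerivAt_tent_of_mem_Ioo_two_mul ⟨hgt, hlt⟩)).deriv]; norm_num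
  · rw [(hasDerivAt_dipStrategy (hasDerivAt_tent_of_lt hgt')).deriv]; norm_num

lemma mintyIntegrand_dipStrategy (h : HasDerivAt (tent t) a c) (ha : 4 * a ≠ 5) :
    mintyIntegrand (dipStrategy t) c =
      8 * tent t c * ((1 - c) * a - tent t c) / (5 * (5 - 4 * a)) := by
  have ha' : 5 - 4 * a ≠ 0 := fun h => ha (by linarith)
  rw [mintyIntegrand, (hasDerivAt_dipStrategy h).deriv, dipStrategy,
    show 1 / 2 - 2 / 5 * a = (5 - 4 * a) / 10 by ring]
  field_simp
  ring

end DipStrategy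

theorem integral_quadratic (p q r a b : ℝ) :
    ∫ x in a..b, p + q * x + r * x ^ 2 =
      p * (b - a) + q * (b ^ 2 - a ^ 2) / 2 + r * (b ^ 3 - a ^ 3) / 3 := by
  have h : ∀ x ∈ uIcc a b,
      HasDerivAt (fun x => p * x + q * x ^ 2 / 2 + r * x ^ 3 / 3) (p + q * x + r * x ^ 2) x := by
    intro x _
    refine ((((hasDerivAt_id x).const_mul p).add
      (((hasDerivAt_pow 2 x).const_mul q).div_const 2)).add
      (((hasDerivAt_pow 3 x).const_mul r).div_const 3)).congr_deriv ?_
    simp; ring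
  rw [integral_eq_sub_of_hasDerivAt h (Continuous.intervalIntegrable (by fun_prop) a b)]
  ring

lemma integral_mintyIntegrand_dipStrategy {t : ℝ} (ht : 0 ≤ t) (ht' : 2 * t ≤ 1) :
    ∫ c in (0 : ℝ)..1, mintyIntegrand (dipStrategy t) c = 8 * t ^ 2 * (12 - 17 * t) / 135 := by
  have h₁ : EqOn (mintyIntegrand (dipStrategy t)) (fun c => 0 + 8 / 5 * c + -16 / 5 * c ^ 2)
      (uIoo 0 t) := fun c hc => by
    rw [uIoo_of_le ht] at hc
    rw [mintyIntegrand_dipStrategy (hasDerivAt_tent_of_mem_Ioo_zero hc) (by norm_num),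
      tent_eqOn_Ioo_zero hc, id]
    ring
  have h₂ : EqOn (mintyIntegrand (dipStrategy t))
      (fun c => -(16 * t + 32 * t ^ 2) / 45 + (8 + 48 * t) / 45 * c + -16 / 45 * c ^ 2)
      (uIoo t (2 * t)) := fun c hc => by
    rw [uIoo_of_le (by linarith)] at hc
    rw [mintyIntegrand_dipStrategy (hasDerivAt_tent_of_mem_Ioo_two_mul hc) (by norm_num),
      tent_eqOn_Ioo_two_mul hc]
    ring
  have h₃ : EqOn (mintyIntegrand (dipStrategy t)) (fun _ => 0) (uIoo (2 * t) 1) := fun c hc => by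
    rw [uIoo_of_le ht'] at hc
    rw [mintyIntegrand_dipStrategy (hasDerivAt_tent_of_lt hc.1) (by norm_num),
      tent_eqOn_Ioi hc.1, Pi.zero_apply]
    ring
  have hi₁ : IntervalIntegrable (mintyIntegrand (dipStrategy t)) volume 0 t :=
    (Continuous.intervalIntegrable (by fun_prop) _ _).congr_uIoo h₁.symm
  have hi₂ : IntervalIntegrable (mintyIntegrand (dipStrategy t)) volume t (2 * t) :=
    (Continuous.intervalIntegrable (by fun_prop) _ _).congr_uIoo h₂.symm
  have hi₃ : IntervalIntegrable (mintyIntegrand (dipStrategy t)) volume (2 * t) 1 :=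
    (Continuous.intervalIntegrable (by fun_prop) _ _).congr_uIoo h₃.symm
  rw [← integral_add_adjacent_intervals (hi₁.trans hi₂) hi₃,
    ← integral_add_adjacent_intervals hi₁ hi₂, integral_congr_uIoo h₁, integral_congr_uIoo h₂,
    integral_congr_uIoo h₃, integral_quadratic, integral_quadratic, intervalIntegral.integral_zero]
  ring

/-- The Minty variational inequality fails locally at the BNE `β*(c) = (1+c)/2`:
for every `ε > 0` there is an admissible strategy `β` (continuous, `[0,1]`-valued,
`β 1 = 1`, `β' ≥ 1/10` a.e.) uniformly `ε`-close to `β*` whose Minty pairing with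
`β*` is strictly positive. -/
theorem stmt5 :
    ∀ ε > (0 : ℝ), ∃ β : ℝ → ℝ,
      ContinuousOn β (Set.Icc (0 : ℝ) 1) ∧
      (∀ c ∈ Set.Icc (0 : ℝ) 1, β c ∈ Set.Icc (0 : ℝ) 1) ∧
      β 1 = 1 ∧
      (∀ᵐ c, c ∈ Set.Icc (0 : ℝ) 1 → 1 / 10 ≤ deriv β c) ∧
      (∀ c ∈ Set.Icc (0 : ℝ) 1, |β c - (1 + c) / 2| < ε) ∧
      0 < ∫ c in (0 : ℝ)..1,
        (β c - (1 + c) / 2) * (1 - c - (β c - c) / deriv β c) := by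
  intro ε hε
  set t := min ε (1 / 4)
  have ht : 0 < t := lt_min hε (by norm_num)
  have htε : t ≤ ε := min_le_left _ _
  have ht₄ : t ≤ 1 / 4 := min_le_right _ _
  refine ⟨dipStrategy t, continuous_dipStrategy.continuousOn,
    fun c hc => dipStrategy_mem_Icc ht.le (by linarith) hc, dipStrategy_one (by linarith),
    ae_le_deriv_dipStrategy, fun c _ => (abs_dipStrategy_sub_le ht.le).trans_lt (by linarith), ?_⟩
  show 0 < ∫ c in (0 : ℝ)..1, mintyIntegrand (dipStrategy t) c
  rw [integral_mintyIntegrand_dipStrategy ht.le (by linarith)]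
  have : 0 < 12 - 17 * t := by linarith
  positivity
end

section
/- Suppose β is absolutely continuous on [0,1] with β' ≥ δ > 0 a.e. and 0 ≤ β ≤ 1, and let d : [0,1] → ℝ be bounded. Then for the two-player game with uniform costs, the Gâteaux derivative of the expected utility U(β,β̃)[d] at a symmetric profile (β,β) equals ∫_0^1 d(c)·𝟙{β(c) > β(0)}·(1 - c - (β(c)-c)/β'(c)) dc, and this defines a bounded linear functional of d with operator norm at most 1 + 2/δ (with respect to the sup norm on d). -/
/-!
Write `G y` for the probability that the rival, bidding `β`, bids above `y`. The bound `β' ≥ δ`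
makes `β` strictly increasing and expanding: `G (β c) = 1 - c`, `G` is `1/δ`-Lipschitz, and
`1 - G` is a local inverse of `β` on its range, so `G' (β c) = -1 / β' c` wherever `β` is
differentiable. The payoff of type `c` under the perturbed bid is
`(β c + ε d c - c) G (β c + ε d c)`; its `ε`-derivative at `0` is
`d c (1 - c - (β c - c) / β' c)` for a.e. `c`, and its difference quotients at `0` are bounded by
`(1 + 1/δ) sup |d|`, so one may differentiate under the integral. On `(0, 1]` the indicator in
`DU` equals one, and the bound on the kernel gives the norm estimate.
-/

open MeasureTheory Filter

/-- Expected utility of player 1 playing `β` against `β̃` in the two-player Bertrand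
game with uniform costs and all-or-nothing demand:
`U(β,β̃) = ∫_0^1 (β(c)-c)·vol{z ∈ [0,1] : β̃(z) > β(c)} dc`. -/
noncomputable def EU (β βt : ℝ → ℝ) : ℝ :=
  ∫ c in (0 : ℝ)..1, (β c - c) *
    (volume {z : ℝ | z ∈ Set.Icc (0 : ℝ) 1 ∧ β c < βt z}).toReal

/-- The claimed Gâteaux derivative of `U` at the symmetric profile `(β,β)` in
direction `d`. -/
noncomputable def DU (β d : ℝ → ℝ) : ℝ :=
  ∫ c in (0 : ℝ)..1, d c * (if β 0 < β c then (1 : ℝ) else 0) *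
    (1 - c - (β c - c) / deriv β c)

open Set Topology

section ParametricIntegral

variable {α : Type*} [MeasurableSpace α] {μ : Measure α} {𝕜 : Type*} [RCLike 𝕜]
  {E : Type*} [NormedAddCommGroup E] [NormedSpace ℝ E] [NormedSpace 𝕜 E] [CompleteSpace E]

theorem hasDerivAt_integral_of_dominated_loc_of_lip' {F : 𝕜 → α → E} {F' : α → E} {x₀ : 𝕜}
    {bound : α → ℝ} {s : Set 𝕜} (hs : s ∈ 𝓝 x₀)
    (hF_meas : ∀ x ∈ s, AEStronglyMeasurable (F x) μ) (hF_int : Integrable (F x₀) μ)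
    (hF'_meas : AEStronglyMeasurable F' μ)
    (h_lipsch : ∀ᵐ a ∂μ, ∀ x ∈ s, ‖F x a - F x₀ a‖ ≤ bound a * ‖x - x₀‖)
    (bound_integrable : Integrable bound μ)
    (h_diff : ∀ᵐ a ∂μ, HasDerivAt (F · a) (F' a) x₀) :
    HasDerivAt (fun x ↦ ∫ a, F x a ∂μ) (∫ a, F' a ∂μ) x₀ := by
  set L : E →L[𝕜] 𝕜 →L[𝕜] E := ContinuousLinearMap.smulRightL 𝕜 𝕜 E 1
  have hm : AEStronglyMeasurable (L ∘ F') μ := L.continuous.comp_aestronglyMeasurable hF'_meas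
  obtain ⟨hLF'_int, key⟩ := hasFDerivAt_integral_of_dominated_loc_of_lip' hs hF_meas hF_int hm
    h_lipsch bound_integrable (h_diff.mono fun _ ha ↦ ha.hasFDerivAt)
  have hF'_int : Integrable F' μ := by
    rw [← integrable_norm_iff hm] at hLF'_int
    simpa [L, Function.comp_def, integrable_norm_iff hF'_meas] using hLF'_int
  rw [hasDerivAt_iff_hasFDerivAt]
  simpa only [Function.comp_def, ContinuousLinearMap.integral_comp_comm _ hF'_int] using! key

end ParametricIntegral

theorem mul_sub_le_sub_of_eq_integral {f f' : ℝ → ℝ} {δ a b : ℝ} (hab : a ≤ b)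
    (hint : IntervalIntegrable f' volume a b) (hFTC : f b - f a = ∫ t in a..b, f' t)
    (hf' : ∀ᵐ t, t ∈ Icc a b → δ ≤ f' t) :
    δ * (b - a) ≤ f b - f a := by
  rw [hFTC]
  calc δ * (b - a) = ∫ _ in a..b, δ := by simp [mul_comm]
    _ ≤ ∫ t in a..b, f' t := intervalIntegral.integral_mono_ae_restrict hab
        intervalIntegrable_const hint ((ae_restrict_iff' measurableSet_Icc).2 hf')

theorem ContinuousOn.aemeasurable_restrict_Ioo {f : ℝ → ℝ} {a b : ℝ} {μ : Measure ℝ}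
    (hf : ContinuousOn f (Icc a b)) : AEMeasurable f (μ.restrict (Ioo a b)) :=
  (hf.aemeasurable measurableSet_Icc).mono_measure
    (Measure.restrict_mono Ioo_subset_Icc_self le_rfl)

-- `EU β β̃ = ∫ c in 0..1, (β c - c) * winProb β̃ (β c)` holds by definition.
noncomputable def winProb (β : ℝ → ℝ) (y : ℝ) : ℝ :=
  (volume {z : ℝ | z ∈ Icc (0 : ℝ) 1 ∧ y < β z}).toReal

noncomputable def perturbedPayoff (β d : ℝ → ℝ) (ε c : ℝ) : ℝ :=
  (β c + ε * d c - c) * winProb β (β c + ε * d c)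

noncomputable def gateauxKernel (β : ℝ → ℝ) (c : ℝ) : ℝ :=
  1 - c - (β c - c) / deriv β c

theorem EU_perturb_eq_setIntegral (β d : ℝ → ℝ) (ε : ℝ) :
    EU (fun c ↦ β c + ε * d c) β = ∫ c in Ioo (0 : ℝ) 1, perturbedPayoff β d ε c :=
  (intervalIntegral.integral_of_le zero_le_one).trans integral_Ioc_eq_integral_Ioo

theorem abs_winProb_le_one (β : ℝ → ℝ) (y : ℝ) : |winProb β y| ≤ 1 := by
  rw [winProb, abs_of_nonneg ENNReal.toReal_nonneg]
  refine ENNReal.toReal_le_of_le_ofReal zero_le_one ?_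
  calc volume {z : ℝ | z ∈ Icc (0 : ℝ) 1 ∧ y < β z} ≤ volume (Icc (0 : ℝ) 1) :=
        measure_mono fun _ hz ↦ hz.1
    _ = ENNReal.ofReal 1 := by simp

section StrictMono

variable {β : ℝ → ℝ} (hβ : StrictMonoOn β (Icc 0 1))
include hβ

theorem winProb_apply {c : ℝ} (hc : c ∈ Icc (0 : ℝ) 1) : winProb β (β c) = 1 - c := by
  have hset : {z : ℝ | z ∈ Icc (0 : ℝ) 1 ∧ β c < β z} = Ioc c 1 := by
    ext z
    constructor
    · rintro ⟨hz, hlt⟩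
      exact ⟨(hβ.lt_iff_lt hc hz).1 hlt, hz.2⟩
    · rintro ⟨hcz, hz1⟩
      have hz : z ∈ Icc (0 : ℝ) 1 := ⟨hc.1.trans hcz.le, hz1⟩
      exact ⟨hz, (hβ.lt_iff_lt hc hz).2 hcz⟩
  rw [winProb, hset, Real.volume_Ioc, ENNReal.toReal_ofReal (sub_nonneg.2 hc.2)]

theorem DU_eq_setIntegral (e : ℝ → ℝ) :
    DU β e = ∫ c in Ioo (0 : ℝ) 1, e c * gateauxKernel β c := by
  rw [DU, intervalIntegral.integral_of_le zero_le_one, integral_Ioc_eq_integral_Ioo]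
  refine setIntegral_congr_fun measurableSet_Ioo fun c hc ↦ ?_
  simp [hβ ⟨le_rfl, zero_le_one⟩ (Ioo_subset_Icc_self hc) hc.1, gateauxKernel]

end StrictMono

section Admissible

variable {δ : ℝ} {β d : ℝ → ℝ} (hδ : 0 < δ) (hcont : ContinuousOn β (Icc 0 1))
  (hrange : ∀ c ∈ Icc (0 : ℝ) 1, β c ∈ Icc (0 : ℝ) 1)
  (hgrow : ∀ a ∈ Icc (0 : ℝ) 1, ∀ b ∈ Icc (0 : ℝ) 1, a ≤ b → δ * (b - a) ≤ β b - β a)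
  (hd' : ∀ᵐ t, t ∈ Icc (0 : ℝ) 1 → δ ≤ deriv β t)

include hδ hgrow in
theorem strictMonoOn_of_mul_sub_le : StrictMonoOn β (Icc 0 1) :=
  fun a ha b hb hab ↦ by nlinarith [hgrow a ha b hb hab.le]

include hgrow in
theorem mul_abs_sub_le {z z' : ℝ} (hz : z ∈ Icc (0 : ℝ) 1) (hz' : z' ∈ Icc (0 : ℝ) 1) :
    δ * |z - z'| ≤ |β z - β z'| := by
  rcases le_total z z' with h | h
  · rw [abs_sub_comm, abs_of_nonneg (sub_nonneg.2 h), abs_sub_comm]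
    exact (hgrow z hz z' hz' h).trans (le_abs_self _)
  · rw [abs_of_nonneg (sub_nonneg.2 h)]
    exact (hgrow z' hz' z hz h).trans (le_abs_self _)

include hδ hgrow in
theorem winProb_le_add_dist (y y' : ℝ) : winProb β y ≤ winProb β y' + dist y y' / δ := by
  set A := {z : ℝ | z ∈ Icc (0 : ℝ) 1 ∧ y < β z}
  set B := {z : ℝ | z ∈ Icc (0 : ℝ) 1 ∧ y' < β z}
  -- `A \ B` is where `y < β ≤ y'`, and `β` expands distances by at least `δ`.
  have hdiam : volume (A \ B) ≤ ENNReal.ofReal (dist y y' / δ) := by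
    refine (Real.volume_le_diam _).trans (Metric.ediam_le_of_forall_dist_le ?_)
    rintro z ⟨⟨hz, hyz⟩, hzB⟩ z' ⟨⟨hz', hyz'⟩, hz'B⟩
    have hzy' : β z ≤ y' := not_lt.1 fun h ↦ hzB ⟨hz, h⟩
    have hz'y' : β z' ≤ y' := not_lt.1 fun h ↦ hz'B ⟨hz', h⟩
    have hβ : |β z - β z'| ≤ dist y y' := by
      rw [Real.dist_eq, abs_sub_comm y]
      exact (abs_sub_le_iff.2 ⟨by linarith, by linarith⟩).trans (le_abs_self _)
    rw [Real.dist_eq, le_div_iff₀ hδ, mul_comm]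
    exact (mul_abs_sub_le hgrow hz hz').trans hβ
  have hAB : volume A ≤ volume B + ENNReal.ofReal (dist y y' / δ) :=
    calc volume A ≤ volume (B ∪ A \ B) :=
          measure_mono (subset_union_right.trans union_sdiff_self.symm.subset)
      _ ≤ volume B + volume (A \ B) := measure_union_le _ _
      _ ≤ _ := by gcongr
  have hB : volume B ≠ ⊤ := (measure_lt_top_of_subset (fun _ hz ↦ hz.1) (by simp)).ne
  have := ENNReal.toReal_le_add hAB hB ENNReal.ofReal_ne_top
  rwa [ENNReal.toReal_ofReal (div_nonneg dist_nonneg hδ.le)] at this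

include hδ hgrow in
theorem abs_winProb_sub_le (y y' : ℝ) : |winProb β y - winProb β y'| ≤ |y - y'| / δ := by
  rw [abs_sub_le_iff, ← Real.dist_eq]
  constructor
  · linarith [winProb_le_add_dist hδ hgrow y y']
  · have := winProb_le_add_dist hδ hgrow y' y
    rw [dist_comm] at this
    linarith

include hδ hgrow in
theorem continuous_winProb : Continuous (winProb β) :=
  (LipschitzWith.of_le_add_mul' (1 / δ) fun y y' ↦ by
    simpa [div_eq_inv_mul] using winProb_le_add_dist hδ hgrow y y').continuous

include hδ hcont hgrow in
theorem apply_one_sub_winProb {y : ℝ} (hy : y ∈ Icc (β 0) (β 1)) :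
    β (1 - winProb β y) = y := by
  obtain ⟨z, hz, rfl⟩ := intermediate_value_Icc zero_le_one hcont hy
  rw [winProb_apply (strictMonoOn_of_mul_sub_le hδ hgrow) hz, sub_sub_cancel]

include hδ hcont hgrow in
theorem hasDerivAt_winProb {b c : ℝ} (hc : c ∈ Ioo (0 : ℝ) 1) (hb : HasDerivAt β b c)
    (hb0 : b ≠ 0) : HasDerivAt (winProb β) (-b⁻¹) (β c) := by
  have hβ := strictMonoOn_of_mul_sub_le hδ hgrow
  have hcI : c ∈ Icc (0 : ℝ) 1 := Ioo_subset_Icc_self hc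
  have hinv : ∀ᶠ y in 𝓝 (β c), β (1 - winProb β y) = y := by
    filter_upwards [Ioo_mem_nhds (hβ ⟨le_rfl, zero_le_one⟩ hcI hc.1)
      (hβ hcI ⟨zero_le_one, le_rfl⟩ hc.2)] with y hy
    exact apply_one_sub_winProb hδ hcont hgrow (Ioo_subset_Icc_self hy)
  have hinv_c : 1 - winProb β (β c) = c := by rw [winProb_apply hβ hcI, sub_sub_cancel]
  have hderiv := HasDerivAt.of_local_left_inverse (g := fun y ↦ 1 - winProb β y)
    (continuous_const.sub (continuous_winProb hδ hgrow)).continuousAt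
    (by rwa [hinv_c]) hb0 hinv
  simpa using hderiv.const_sub 1

include hδ hcont hgrow in
theorem hasDerivAt_perturbedPayoff {c : ℝ} (hc : c ∈ Ioo (0 : ℝ) 1) (hβ' : δ ≤ deriv β c) :
    HasDerivAt (perturbedPayoff β d · c) (d c * gateauxKernel β c) 0 := by
  have hβ'0 : deriv β c ≠ 0 := (hδ.trans_le hβ').ne'
  have hbid : HasDerivAt (fun ε : ℝ ↦ β c + ε * d c) (d c) 0 := by
    simpa using ((hasDerivAt_id (0 : ℝ)).mul_const (d c)).const_add (β c)
  have hwin : HasDerivAt (fun ε : ℝ ↦ winProb β (β c + ε * d c)) (-(deriv β c)⁻¹ * d c) 0 := by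
    have h := hasDerivAt_winProb hδ hcont hgrow hc
      (differentiableAt_of_deriv_ne_zero hβ'0).hasDerivAt hβ'0
    exact (by simpa using h : HasDerivAt (winProb β) _ (β c + 0 * d c)).comp 0 hbid
  refine ((hbid.sub_const c).mul hwin).congr_deriv ?_
  rw [zero_mul, add_zero, winProb_apply (strictMonoOn_of_mul_sub_le hδ hgrow)
    (Ioo_subset_Icc_self hc), gateauxKernel]
  field_simp
  ring

include hδ hgrow in
theorem abs_perturbedPayoff_sub_le {c M : ℝ} (hβc : |β c - c| ≤ 1) (hd : |d c| ≤ M) (ε : ℝ) :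
    |perturbedPayoff β d ε c - perturbedPayoff β d 0 c| ≤ M * (1 + 1 / δ) * |ε| := by
  have hM : 0 ≤ M := (abs_nonneg _).trans hd
  have hεd : |ε * d c| ≤ |ε| * M := by rw [abs_mul]; gcongr
  have hwin := abs_winProb_sub_le hδ hgrow (β c + ε * d c) (β c)
  rw [add_sub_cancel_left] at hwin
  have hsplit : perturbedPayoff β d ε c - perturbedPayoff β d 0 c =
      ε * d c * winProb β (β c + ε * d c) +
        (β c - c) * (winProb β (β c + ε * d c) - winProb β (β c)) := by
    simp only [perturbedPayoff, zero_mul, add_zero]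
    ring
  rw [hsplit]
  calc _ ≤ |ε * d c| * |winProb β (β c + ε * d c)| +
        |β c - c| * |winProb β (β c + ε * d c) - winProb β (β c)| := by
        rw [← abs_mul, ← abs_mul]; exact abs_add_le _ _
    _ ≤ |ε| * M * 1 + 1 * (|ε| * M / δ) := by
        gcongr
        · exact abs_winProb_le_one _ _
        · exact hwin.trans (by gcongr)
    _ = M * (1 + 1 / δ) * |ε| := by ring

include hδ in
theorem abs_gateauxKernel_le {c : ℝ} (hc : c ∈ Icc (0 : ℝ) 1) (hβc : |β c - c| ≤ 1)
    (hβ' : δ ≤ deriv β c) : |gateauxKernel β c| ≤ 1 + 1 / δ := by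
  have hquot : |(β c - c) / deriv β c| ≤ 1 / δ := by
    rw [abs_div, abs_of_pos (hδ.trans_le hβ')]
    exact div_le_div₀ zero_le_one hβc hδ hβ'
  calc |gateauxKernel β c| ≤ |1 - c| + |(β c - c) / deriv β c| := abs_sub _ _
    _ ≤ 1 + 1 / δ := by
        gcongr
        exact abs_sub_le_of_nonneg_of_le zero_le_one le_rfl hc.1 hc.2

include hrange in
theorem abs_sub_le_one_of_mem_Icc {c : ℝ} (hc : c ∈ Icc (0 : ℝ) 1) : |β c - c| ≤ 1 :=
  abs_sub_le_of_nonneg_of_le (hrange c hc).1 (hrange c hc).2 hc.1 hc.2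

include hδ hrange hd' in
theorem ae_norm_mul_gateauxKernel_le {e : ℝ → ℝ} {M : ℝ} (he : ∀ c, |e c| ≤ M) :
    ∀ᵐ c ∂volume.restrict (Ioo (0 : ℝ) 1), ‖e c * gateauxKernel β c‖ ≤ M * (1 + 1 / δ) := by
  filter_upwards [ae_restrict_mem measurableSet_Ioo, ae_restrict_of_ae hd'] with c hc hβ'
  have hcI : c ∈ Icc (0 : ℝ) 1 := Ioo_subset_Icc_self hc
  rw [Real.norm_eq_abs, abs_mul]
  exact mul_le_mul (he c) (abs_gateauxKernel_le hδ hcI (abs_sub_le_one_of_mem_Icc hrange hcI)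
    (hβ' hcI)) (abs_nonneg _) ((abs_nonneg _).trans (he c))

include hδ hcont hrange hd' in
theorem integrableOn_mul_gateauxKernel {e : ℝ → ℝ} (he : Measurable e) {M : ℝ}
    (hM : ∀ c, |e c| ≤ M) : IntegrableOn (fun c ↦ e c * gateauxKernel β c) (Ioo 0 1) := by
  have hβ : AEMeasurable β (volume.restrict (Ioo 0 1)) := hcont.aemeasurable_restrict_Ioo
  refine Integrable.mono' (integrable_const (M * (1 + 1 / δ))) ?_
    (ae_norm_mul_gateauxKernel_le hδ hrange hd' hM)
  have := measurable_deriv β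
  exact (by unfold gateauxKernel; fun_prop : AEMeasurable _ _).aestronglyMeasurable

include hδ hcont hrange hgrow hd' in
theorem hasDerivAt_EU_perturb (hdm : Measurable d) {M : ℝ} (hM : ∀ c, |d c| ≤ M) :
    HasDerivAt (fun ε ↦ EU (fun c ↦ β c + ε * d c) β) (DU β d) 0 := by
  have hβ : AEMeasurable β (volume.restrict (Ioo 0 1)) := hcont.aemeasurable_restrict_Ioo
  have hwin := (continuous_winProb hδ hgrow).measurable
  have hmeas : ∀ ε, AEStronglyMeasurable (perturbedPayoff β d ε) (volume.restrict (Ioo 0 1)) :=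
    fun ε ↦ (by unfold perturbedPayoff; fun_prop : AEMeasurable _ _).aestronglyMeasurable
  have hint₀ : IntegrableOn (perturbedPayoff β d 0) (Ioo 0 1) := by
    refine Integrable.mono' (integrable_const 1) (hmeas 0) ?_
    filter_upwards [ae_restrict_mem measurableSet_Ioo] with c hc
    simp only [perturbedPayoff, zero_mul, add_zero, Real.norm_eq_abs, abs_mul]
    exact mul_le_one₀ (abs_sub_le_one_of_mem_Icc hrange (Ioo_subset_Icc_self hc))
      (abs_nonneg _) (abs_winProb_le_one _ _)
  simp_rw [EU_perturb_eq_setIntegral]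
  rw [DU_eq_setIntegral (strictMonoOn_of_mul_sub_le hδ hgrow)]
  refine hasDerivAt_integral_of_dominated_loc_of_lip' (bound := fun _ ↦ M * (1 + 1 / δ))
    univ_mem (fun ε _ ↦ hmeas ε) hint₀
    (integrableOn_mul_gateauxKernel hδ hcont hrange hd' hdm hM).aestronglyMeasurable ?_
    (integrable_const _) ?_
  · filter_upwards [ae_restrict_mem measurableSet_Ioo] with c hc ε _
    simpa using abs_perturbedPayoff_sub_le hδ hgrow
      (abs_sub_le_one_of_mem_Icc hrange (Ioo_subset_Icc_self hc)) (hM c) ε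
  · filter_upwards [ae_restrict_mem measurableSet_Ioo, ae_restrict_of_ae hd'] with c hc hβ'
    exact hasDerivAt_perturbedPayoff hδ hcont hgrow hc (hβ' (Ioo_subset_Icc_self hc))

include hδ hrange hgrow hd' in
theorem abs_DU_le {M : ℝ} (hM : ∀ c, |d c| ≤ M) : |DU β d| ≤ (1 + 2 / δ) * M := by
  have hM₀ : 0 ≤ M := (abs_nonneg _).trans (hM 0)
  rw [DU_eq_setIntegral (strictMonoOn_of_mul_sub_le hδ hgrow), ← Real.norm_eq_abs]
  calc _ ≤ M * (1 + 1 / δ) * volume.real (Ioo (0 : ℝ) 1) :=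
        norm_setIntegral_le_of_norm_le_const_ae (by simp)
          (ae_norm_mul_gateauxKernel_le hδ hrange hd' hM)
    _ = (1 + 1 / δ) * M := by rw [Real.volume_real_Ioo_of_le zero_le_one]; ring
    _ ≤ (1 + 2 / δ) * M := by gcongr; norm_num

end Admissible

/-- For an admissible `β` (absolutely continuous, `[0,1]`-valued, `β' ≥ δ > 0` a.e.)
and bounded measurable `d`, the Gâteaux derivative of the expected utility at the
symmetric profile `(β,β)` in direction `d` equals
`∫_0^1 d(c)·𝟙{β(c) > β(0)}·(1 - c - (β(c)-c)/β'(c)) dc`, and this is a bounded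
linear functional of `d` with norm at most `1 + 2/δ` w.r.t. the sup norm. -/
theorem stmt19 (δ : ℝ) (hδ : 0 < δ) (β : ℝ → ℝ)
    (hcont : ContinuousOn β (Set.Icc (0 : ℝ) 1))
    (hrange : ∀ c ∈ Set.Icc (0 : ℝ) 1, β c ∈ Set.Icc (0 : ℝ) 1)
    (hint : IntervalIntegrable (deriv β) volume 0 1)
    (hFTC : ∀ a ∈ Set.Icc (0 : ℝ) 1, ∀ b ∈ Set.Icc (0 : ℝ) 1,
      β b - β a = ∫ t in a..b, deriv β t)
    (hd' : ∀ᵐ t, t ∈ Set.Icc (0 : ℝ) 1 → δ ≤ deriv β t)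
    (d : ℝ → ℝ) (hdm : Measurable d) (Md : ℝ) (hMd : ∀ c, |d c| ≤ Md) :
    Tendsto (fun ε : ℝ =>
        ε⁻¹ * (EU (fun c => β c + ε * d c) β - EU β β)) (nhdsWithin 0 {0}ᶜ)
      (nhds (DU β d)) ∧
    |DU β d| ≤ (1 + 2 / δ) * Md ∧
    (∀ d₁ d₂ : ℝ → ℝ, Measurable d₁ → Measurable d₂ → (∃ M, ∀ c, |d₁ c| ≤ M) →
      (∃ M, ∀ c, |d₂ c| ≤ M) → DU β (d₁ + d₂) = DU β d₁ + DU β d₂) ∧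
    (∀ (a : ℝ) (d₁ : ℝ → ℝ), Measurable d₁ → (∃ M, ∀ c, |d₁ c| ≤ M) →
      DU β (a • d₁) = a * DU β d₁) := by
  have hgrow : ∀ a ∈ Icc (0 : ℝ) 1, ∀ b ∈ Icc (0 : ℝ) 1, a ≤ b → δ * (b - a) ≤ β b - β a :=
    fun a ha b hb hab ↦ mul_sub_le_sub_of_eq_integral hab
      (hint.mono_set (uIcc_subset_uIcc (Icc_subset_uIcc ha) (Icc_subset_uIcc hb)))
      (hFTC a ha b hb)
      (hd'.mono fun t ht hab ↦ ht (Icc_subset_Icc ha.1 hb.2 hab))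
  have hβ := strictMonoOn_of_mul_sub_le hδ hgrow
  refine ⟨?_, abs_DU_le hδ hrange hgrow hd' hMd, ?_, ?_⟩
  · refine (hasDerivAt_EU_perturb hδ hcont hrange hgrow hd' hdm hMd).tendsto_slope.congr
      fun ε ↦ ?_
    simp [slope_def_field, div_eq_inv_mul]
  · rintro d₁ d₂ hd₁ hd₂ ⟨M₁, hM₁⟩ ⟨M₂, hM₂⟩
    simp only [DU_eq_setIntegral hβ, Pi.add_apply, add_mul]
    exact integral_add (integrableOn_mul_gateauxKernel hδ hcont hrange hd' hd₁ hM₁)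
      (integrableOn_mul_gateauxKernel hδ hcont hrange hd' hd₂ hM₂)
  · rintro a d₁ - -
    simp only [DU_eq_setIntegral hβ, Pi.smul_apply, smul_eq_mul, mul_assoc]
    exact integral_const_mul a _
end
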